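/- Under the illumination setup, the function t is differentiable with t'(s) = det(c(s), γ'(t(s)))²·det(γ'(s), γ''(s)) / (det(c(s), γ'(s))²·det(γ'(t(s)), γ''(t(s)))) for every s, and the illumination curve satisfies r₃'(s) = −( det(c(s), γ'(t(s)))·det(γ'(s), γ''(s)) / (det(c(s), γ'(s))·det(γ'(s), γ'(t(s)))) ) · c(s). In particular, r₃ is a regular parametrization whose tangent vector at r₃(s) is parallel to the chord c(s). -/

import Mathlib

open Real MeasureTheory intervalIntegral

set_option maxHeartbeats 2000000

noncomputable section

/-- The Euclidean plane. -/
abbrev R2 := EuclideanSpace ℝ (Fin 2)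

/-- The planar determinant `det(u,v) = u₁v₂ − u₂v₁`. -/
def det2 (u v : R2) : ℝ := u 0 * v 1 - u 1 * v 0

/-- The intersection point of the tangent lines to `γ` at `γ(s)` and `γ(t(s))`. -/
def tangentPole (γ : ℝ → R2) (t : ℝ → ℝ) (s : ℝ) : R2 :=
  γ s + (det2 (γ (t s) - γ s) (deriv γ (t s)) / det2 (deriv γ s) (deriv γ (t s))) • deriv γ s

lemma hasDerivAt_proj {f : ℝ → R2} {v : R2} {s : ℝ} (h : HasDerivAt f v s) (i : Fin 2) :
    HasDerivAt (fun s => f s i) (v i) s :=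
  (EuclideanSpace.proj i : R2 →L[ℝ] ℝ).hasFDerivAt.comp_hasDerivAt s h

lemma hasDerivAt_det2 {f g : ℝ → R2} {f' g' : R2} {s : ℝ}
    (hf : HasDerivAt f f' s) (hg : HasDerivAt g g' s) :
    HasDerivAt (fun s => det2 (f s) (g s)) (det2 f' (g s) + det2 (f s) g') s := by
  have h0 := ((hasDerivAt_proj hf 0).mul (hasDerivAt_proj hg 1))
  have h1 := ((hasDerivAt_proj hf 1).mul (hasDerivAt_proj hg 0))
  have := h0.sub h1
  refine HasDerivAt.congr_deriv this ?_
  simp [det2]; ring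

lemma continuous_det2 {f g : ℝ → R2} (hf : Continuous f) (hg : Continuous g) :
    Continuous fun u => det2 (f u) (g u) := by
  simp only [det2]
  exact (((EuclideanSpace.proj (0:Fin 2)).continuous.comp hf).mul
      ((EuclideanSpace.proj (1:Fin 2)).continuous.comp hg)).sub
    (((EuclideanSpace.proj (1:Fin 2)).continuous.comp hf).mul
      ((EuclideanSpace.proj (0:Fin 2)).continuous.comp hg))

lemma det2_eq_zero_vec {d u w : R2} (h1 : det2 d u = 0) (h2 : det2 d w = 0)
    (h3 : det2 u w ≠ 0) : d = 0 := by
  have e0 : d 0 * det2 u w = u 0 * det2 d w - w 0 * det2 d u := by simp [det2]; ring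
  have e1 : d 1 * det2 u w = u 1 * det2 d w - w 1 * det2 d u := by simp [det2]; ring
  rw [h1, h2] at e0 e1
  simp at e0 e1
  ext i
  fin_cases i <;> simp [e0.resolve_right h3, e1.resolve_right h3]

/-- derivative of the illumination curve. -/
theorem stmt4
    (γ : ℝ → R2) (L : ℝ) (hL : 0 < L)
    (hγ : ContDiff ℝ 3 γ)
    (hper : ∀ s, γ (s + L) = γ s)
    (hreg : ∀ s, deriv γ s ≠ 0)
    (hinj : Set.InjOn γ (Set.Ico 0 L))
    (hor : 0 < ∫ s in (0:ℝ)..L, det2 (γ s) (deriv γ s))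
    (hcurv : ∀ s, 0 < det2 (deriv γ s) (deriv (deriv γ) s))
    (K : Set R2) (hKconv : Convex ℝ K) (hKcomp : IsCompact K)
    (hKint : (interior K).Nonempty) (hKbd : frontier K = Set.range γ)
    (δ' : ℝ) (hδ0 : 0 < δ')
    (t : ℝ → ℝ) (ht : ContDiff ℝ 1 t)
    (htrange : ∀ s, s < t s ∧ t s < s + L)
    (hpar : ∀ s, det2 (deriv γ s) (deriv γ (t s)) ≠ 0)
    (hc1 : ∀ s, det2 (γ (t s) - γ s) (deriv γ s) ≠ 0)
    (hc2 : ∀ s, det2 (γ (t s) - γ s) (deriv γ (t s)) ≠ 0)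
    (hA : ∀ s, -(1/2) * ∫ u in s..t s, det2 (γ u - tangentPole γ t s) (deriv γ u) = δ') :
    ∀ s : ℝ,
      HasDerivAt t
        (det2 (γ (t s) - γ s) (deriv γ (t s)) ^ 2 * det2 (deriv γ s) (deriv (deriv γ) s) /
          (det2 (γ (t s) - γ s) (deriv γ s) ^ 2 *
            det2 (deriv γ (t s)) (deriv (deriv γ) (t s)))) s ∧
      HasDerivAt (tangentPole γ t)
        ((-(det2 (γ (t s) - γ s) (deriv γ (t s)) * det2 (deriv γ s) (deriv (deriv γ) s) /
            (det2 (γ (t s) - γ s) (deriv γ s) * det2 (deriv γ s) (deriv γ (t s))))) •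
          (γ (t s) - γ s)) s ∧
      ∃ a : ℝ, a ≠ 0 ∧ deriv (tangentPole γ t) s = a • (γ (t s) - γ s) := by
  intro s
  have hγdiff : Differentiable ℝ γ := hγ.differentiable (by norm_num)
  have hγ2 : ContDiff ℝ 2 (deriv γ) := by
    have hh : ContDiff ℝ (2 + 1) γ := by exact_mod_cast hγ
    exact (contDiff_succ_iff_deriv.mp hh).2.2
  have hγ'diff : Differentiable ℝ (deriv γ) := hγ2.differentiable (by norm_num)
  have hγ'cont : Continuous (deriv γ) := hγ'diff.continuous
  have hd1 : ∀ u, HasDerivAt γ (deriv γ u) u := fun u => (hγdiff u).hasDerivAt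
  have hd2 : ∀ u, HasDerivAt (deriv γ) (deriv (deriv γ) u) u := fun u => (hγ'diff u).hasDerivAt
  have htd : HasDerivAt t (deriv t s) s := ((ht.differentiable (by norm_num)) s).hasDerivAt
  have cf : Continuous fun u => det2 (γ u) (deriv γ u) := continuous_det2 hγdiff.continuous hγ'cont
  -- constancy of the area function, rewritten
  have hGconst : ∀ x, ((∫ u in (0:ℝ)..t x, det2 (γ u) (deriv γ u))
      - ∫ u in (0:ℝ)..x, det2 (γ u) (deriv γ u))
      - det2 (tangentPole γ t x) (γ (t x) - γ x) = -(2*δ') := by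
    intro x
    have cρ : Continuous fun u => det2 (tangentPole γ t x) (deriv γ u) :=
      continuous_det2 continuous_const hγ'cont
    have hFd : ∀ u, HasDerivAt (fun u => det2 (tangentPole γ t x) (γ u))
        (det2 (tangentPole γ t x) (deriv γ u)) u := by
      intro u
      have h0 := hasDerivAt_det2 (hasDerivAt_const u (tangentPole γ t x)) (hd1 u)
      convert h0 using 1
      simp [det2]
    have key : (∫ u in x..t x, det2 (γ u - tangentPole γ t x) (deriv γ u))
        = ((∫ u in (0:ℝ)..t x, det2 (γ u) (deriv γ u))
            - ∫ u in (0:ℝ)..x, det2 (γ u) (deriv γ u))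
          - det2 (tangentPole γ t x) (γ (t x) - γ x) := by
      have h1 : (fun u => det2 (γ u - tangentPole γ t x) (deriv γ u))
          = fun u => det2 (γ u) (deriv γ u) - det2 (tangentPole γ t x) (deriv γ u) := by
        funext u; simp [det2, PiLp.sub_apply]; ring
      rw [h1, intervalIntegral.integral_sub (cf.intervalIntegrable _ _)
        (cρ.intervalIntegrable _ _)]
      congr 1
      · exact (intervalIntegral.integral_interval_sub_left (cf.intervalIntegrable _ _)
          (cf.intervalIntegrable _ _)).symm
      · rw [intervalIntegral.integral_eq_sub_of_hasDerivAt (fun u _ => hFd u)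
          (cρ.intervalIntegrable _ _)]
        simp [det2, PiLp.sub_apply]; ring
    have hx := hA x
    rw [key] at hx
    linarith
  -- derivative of the pieces at s
  have hcd : HasDerivAt (fun x => γ (t x) - γ x)
      (deriv t s • deriv γ (t s) - deriv γ s) s := ((hd1 (t s)).scomp s htd).sub (hd1 s)
  have hhd : HasDerivAt (fun x => deriv γ (t x)) (deriv t s • deriv (deriv γ) (t s)) s :=
    (hd2 (t s)).scomp s htd
  have hρd := (hd1 s).add (((hasDerivAt_det2 hcd hhd).div (hasDerivAt_det2 (hd2 s) hhd)
      (hpar s)).smul (hd2 s))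
  have hI1 : HasDerivAt (fun x => ∫ u in (0:ℝ)..t x, det2 (γ u) (deriv γ u))
      (det2 (γ (t s)) (deriv γ (t s)) * deriv t s) s := by
    have hF : HasDerivAt (fun y => ∫ u in (0:ℝ)..y, det2 (γ u) (deriv γ u))
        (det2 (γ (t s)) (deriv γ (t s))) (t s) :=
      intervalIntegral.integral_hasDerivAt_right (cf.intervalIntegrable _ _)
        (cf.stronglyMeasurableAtFilter _ _) cf.continuousAt
    exact hF.comp s htd
  have hI2 : HasDerivAt (fun x => ∫ u in (0:ℝ)..x, det2 (γ u) (deriv γ u))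
      (det2 (γ s) (deriv γ s)) s :=
    intervalIntegral.integral_hasDerivAt_right (cf.intervalIntegrable _ _)
      (cf.stronglyMeasurableAtFilter _ _) cf.continuousAt
  have hGd := (hI1.sub hI2).sub
    (hasDerivAt_det2 (f := tangentPole γ t) (g := fun x => γ (t x) - γ x) hρd hcd)
  have hG0 : HasDerivAt (fun x => ((∫ u in (0:ℝ)..t x, det2 (γ u) (deriv γ u))
      - ∫ u in (0:ℝ)..x, det2 (γ u) (deriv γ u))
      - det2 (tangentPole γ t x) (γ (t x) - γ x)) 0 s := by
    have heq : (fun x => ((∫ u in (0:ℝ)..t x, det2 (γ u) (deriv γ u))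
        - ∫ u in (0:ℝ)..x, det2 (γ u) (deriv γ u))
        - det2 (tangentPole γ t x) (γ (t x) - γ x)) = fun _ => -(2*δ') := funext hGconst
    rw [heq]
    exact hasDerivAt_const s _
  have hE := hGd.unique hG0
  have hE0 := hE
  have hQc := hpar s
  simp only [det2] at hQc
  simp only [det2, tangentPole, PiLp.add_apply, PiLp.sub_apply, PiLp.smul_apply,
    smul_eq_mul, Pi.div_apply] at hE
  have hQc' : (deriv γ (t s)) 1 * (deriv γ s) 0 - (deriv γ (t s)) 0 * (deriv γ s) 1 ≠ 0 := by
    intro h; apply hQc; linarith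
  field_simp [hQc, hQc'] at hE
  -- the derivative of t
  have hkey : (deriv t s * ((det2 (γ (t s) - γ s) (deriv γ s))^2
        * det2 (deriv γ (t s)) (deriv (deriv γ) (t s)))
      - (det2 (γ (t s) - γ s) (deriv γ (t s)))^2 * det2 (deriv γ s) (deriv (deriv γ) s))
      * (det2 (deriv γ s) (deriv γ (t s)))^2 = 0 := by
    simp only [det2, PiLp.sub_apply]
    set_option maxRecDepth 100000 in
    linear_combination -((deriv γ s) 0 * (deriv γ (t s)) 1 - (deriv γ s) 1 * (deriv γ (t s)) 0)^2 * hE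
  have hτeq : deriv t s
      = det2 (γ (t s) - γ s) (deriv γ (t s)) ^ 2 * det2 (deriv γ s) (deriv (deriv γ) s) /
        (det2 (γ (t s) - γ s) (deriv γ s) ^ 2 *
          det2 (deriv γ (t s)) (deriv (deriv γ) (t s))) := by
    have h2 := sub_eq_zero.mp ((mul_eq_zero.mp hkey).resolve_right
      (pow_ne_zero 2 (hpar s)))
    rw [eq_div_iff (mul_ne_zero (pow_ne_zero 2 (hc1 s)) (hcurv (t s)).ne')]
    exact h2
  refine ⟨hτeq ▸ htd, ?_⟩
  -- the derivative vector of the tangent pole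
  obtain ⟨v, hvd, hv⟩ : ∃ v, HasDerivAt (tangentPole γ t) v s ∧ v = deriv γ s +
        ((det2 (γ (t s) - γ s) (deriv γ (t s)) / det2 (deriv γ s) (deriv γ (t s))) •
            deriv (deriv γ) s +
          (((det2 (deriv t s • deriv γ (t s) - deriv γ s) (deriv γ (t s)) +
                det2 (γ (t s) - γ s) (deriv t s • deriv (deriv γ) (t s))) *
              det2 (deriv γ s) (deriv γ (t s)) -
            det2 (γ (t s) - γ s) (deriv γ (t s)) *
              (det2 (deriv (deriv γ) s) (deriv γ (t s)) +
                det2 (deriv γ s) (deriv t s • deriv (deriv γ) (t s)))) /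
            det2 (deriv γ s) (deriv γ (t s)) ^ 2) • deriv γ s) := ⟨_, hρd, rfl⟩
  have hRc := hc1 s
  simp only [det2, PiLp.sub_apply] at hRc
  have e2 : det2 v (γ (t s) - γ s) * det2 (deriv γ s) (deriv γ (t s)) = 0 := by
    rw [hv]
    have hl : det2 (γ (t s) - γ s) (deriv γ (t s)) / det2 (deriv γ s) (deriv γ (t s)) *
        det2 (deriv γ s) (deriv γ (t s)) = det2 (γ (t s) - γ s) (deriv γ (t s)) :=
      div_mul_cancel₀ _ (hpar s)
    linear_combination (norm := skip) (-hE0 - deriv t s * hl) * det2 (deriv γ s) (deriv γ (t s))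
    simp only [det2, tangentPole, PiLp.add_apply, PiLp.sub_apply, PiLp.smul_apply, smul_eq_mul, Pi.div_apply]
    ring
  have hvc : det2 v (γ (t s) - γ s) = 0 :=
    (mul_eq_zero.mp e2).resolve_right (hpar s)
  set a : ℝ := -(det2 (γ (t s) - γ s) (deriv γ (t s)) * det2 (deriv γ s) (deriv (deriv γ) s) /
      (det2 (γ (t s) - γ s) (deriv γ s) * det2 (deriv γ s) (deriv γ (t s)))) with ha
  have e1 : det2 (v - a • (γ (t s) - γ s)) (deriv γ s) = 0 := by
    rw [hv, ha]
    have hR1 : det2 (γ (t s) - γ s) (deriv γ (t s)) * det2 (deriv γ s) (deriv (deriv γ) s) /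
        (det2 (γ (t s) - γ s) (deriv γ s) * det2 (deriv γ s) (deriv γ (t s))) *
        det2 (γ (t s) - γ s) (deriv γ s) = det2 (γ (t s) - γ s) (deriv γ (t s)) *
        det2 (deriv γ s) (deriv (deriv γ) s) / det2 (deriv γ s) (deriv γ (t s)) := by
      rw [mul_comm (det2 (γ (t s) - γ s) (deriv γ s)), ← div_div, div_mul_cancel₀ _ (hc1 s)]
    linear_combination (norm := skip) hR1
    simp only [det2, tangentPole, PiLp.add_apply, PiLp.sub_apply, PiLp.smul_apply, smul_eq_mul, Pi.div_apply]
    ring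
  have e2' : det2 (v - a • (γ (t s) - γ s)) (γ (t s) - γ s) = 0 := by
    simp only [det2, PiLp.sub_apply, PiLp.smul_apply, smul_eq_mul] at hvc ⊢
    linear_combination hvc
  have hgc : det2 (deriv γ s) (γ (t s) - γ s) ≠ 0 := by
    have h := hc1 s
    simp only [det2, PiLp.sub_apply] at h ⊢
    intro hcon; exact h (by linarith)
  have hd0 : v - a • (γ (t s) - γ s) = 0 := det2_eq_zero_vec e1 e2' hgc
  have hveq : v = a • (γ (t s) - γ s) := sub_eq_zero.mp hd0
  have hvd' : HasDerivAt (tangentPole γ t) (a • (γ (t s) - γ s)) s := hveq ▸ hvd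
  refine ⟨hvd', ⟨a, ?_, hvd'.deriv⟩⟩
  rw [ha]
  exact neg_ne_zero.mpr (div_ne_zero (mul_ne_zero (hc2 s) (hcurv s).ne')
    (mul_ne_zero (hc1 s) (hpar s)))
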